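/- arXiv:1212.5663 — 4 statements merged into one kernel-verified Lean document; each statement's English description precedes it below -/
import Mathlib

section
/- Let A be a finite ring with identity, let γ ∈ A be a primitive m-th root of unity, and set x = (1, γ, γ², …, γ^{m-1}). For 0 < k < m, the right dual of the left generalized Reed-Solomon code with support x and multiplier vector x and dimension parameter k (i.e., spanned on the left by the vectors (γ^{0·i}, γ^{1·i}, …, γ^{(m-1)i}) for i = 1,…,k) equals the right Reed-Solomon code with support x and dimension parameter m - k (spanned on the right by (γ^{0·i},…,γ^{(m-1)i}) for i = 0,…,m-k-1). -/
/-!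
Let `F = (γ^{ij})` and `F' = (γ^{(m-i)j})`. Since `γ^d - 1` is a unit for `m ∤ d`, the geometric
sum `∑_{j<m} γ^{jd}` vanishes unless `m ∣ d`. This orthogonality gives `F' F = m` and shows that
the generators of the two codes are orthogonal. In the commutative bicommutant of `γ`,
`det F' · det F = m^m` with both Vandermonde determinants products of units `γ^a - γ^b`, so `m`
is a unit. Matrices over a finite ring form a Dedekind-finite monoid, hence also `F (m⁻¹ F') = 1`:
every `y` is `F c` with `c = m⁻¹ F' y`, and for `m - k ≤ i < m` the entry `c_i` is `m⁻¹` times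
the inner product of `y` with the generator `(γ^{j(m-i)})_j` of the left code, hence zero.
-/

open Finset Matrix

theorem Fin.sum_castLE_eq_sum {M : Type*} [AddCommMonoid M] {n N : ℕ} (h : n ≤ N)
    (f : Fin N → M) (hf : ∀ i : Fin N, n ≤ i → f i = 0) :
    ∑ i : Fin n, f (Fin.castLE h i) = ∑ i, f i :=
  Fintype.sum_of_injective _ (Fin.castLE_injective h) _ _
    (fun i hi => hf i (by simpa [Fin.range_castLE] using hi)) fun _ => rfl

section

variable {A : Type*} [Ring A] {m : ℕ} {γ : A}

theorem geom_sum_eq_zero_of_pow_eq_one {z : A} (hz : z ^ m = 1) (hz1 : IsUnit (z - 1)) :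
    ∑ i ∈ range m, z ^ i = 0 :=
  hz1.mul_left_eq_zero.1 <| by rw [geom_sum_mul, hz, sub_self]

theorem sum_pow_mul_eq_ite (hroot : γ ^ m = 1)
    (hprim : ∀ i : ℕ, 0 < i → i < m → IsUnit (γ ^ i - 1)) (d : ℕ) :
    ∑ j : Fin m, γ ^ ((j : ℕ) * d) = if m ∣ d then (m : A) else 0 := by
  split_ifs with hd
  · obtain ⟨e, rfl⟩ := hd
    simp [mul_left_comm _ m, pow_mul, hroot]
  rcases Nat.eq_zero_or_pos m with rfl | hm
  · simp
  have hpos : 0 < d % m := Nat.pos_of_ne_zero fun h => hd (Nat.dvd_of_mod_eq_zero h)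
  calc ∑ j : Fin m, γ ^ ((j : ℕ) * d) = ∑ j ∈ range m, (γ ^ (d % m)) ^ j := by
        simp only [← pow_eq_pow_mod d hroot, ← pow_mul, mul_comm d]
        exact Fin.sum_univ_eq_sum_range (fun j => γ ^ (j * d)) m
    _ = 0 := geom_sum_eq_zero_of_pow_eq_one (by rw [← pow_mul, mul_comm, pow_mul, hroot, one_pow])
        (hprim _ hpos (Nat.mod_lt d hm))

theorem isUnit_pow_sub_pow (hroot : γ ^ m = 1)
    (hprim : ∀ i : ℕ, 0 < i → i < m → IsUnit (γ ^ i - 1)) {a b : ℕ} (hab : a ≠ b)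
    (ha : a < b + m) (hb : b < a + m) : IsUnit (γ ^ a - γ ^ b) := by
  wlog hba : b < a generalizing a b
  · rw [← neg_sub]
    exact (this hab.symm hb ha (by omega)).neg
  rw [← Nat.add_sub_of_le hba.le, pow_add, ← mul_sub_one]
  exact ((IsUnit.of_pow_eq_one hroot (by omega)).pow b).mul (hprim _ (by omega) (by omega))

-- `Matrix.vandermonde` needs a commutative ring.
def powMatrix (γ : A) (e : Fin m → ℕ) : Matrix (Fin m) (Fin m) A :=
  of fun i j => γ ^ (e i * j)

theorem powMatrix_sub_mul_powMatrix (hroot : γ ^ m = 1)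
    (hprim : ∀ i : ℕ, 0 < i → i < m → IsUnit (γ ^ i - 1)) :
    powMatrix γ (fun i => m - i) * powMatrix γ (↑) = (m : A) • (1 : Matrix (Fin m) (Fin m) A) := by
  ext i l
  have hdvd : m ∣ m - i + l ↔ i = l := by
    refine ⟨fun h => Fin.ext ?_, fun h => by simp [h, Nat.sub_add_cancel l.isLt.le]⟩
    have := Nat.eq_of_dvd_of_lt_two_mul (by omega) h (by omega)
    omega
  simp only [powMatrix, mul_apply, of_apply, ← pow_add, Matrix.smul_apply, one_apply,
    smul_eq_mul, mul_ite, mul_one, mul_zero]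
  simp_rw [show ∀ j : Fin m, (m - i) * (j : ℕ) + j * l = j * (m - i + l) from fun j => by ring]
  simp only [sum_pow_mul_eq_ite hroot hprim, hdvd]

theorem isUnit_det_powMatrix {R : Type*} [CommRing R] {γ : R} (hroot : γ ^ m = 1)
    (hprim : ∀ i : ℕ, 0 < i → i < m → IsUnit (γ ^ i - 1)) {e : Fin m → ℕ}
    (he : Function.Injective e) (hclose : ∀ i j, e i < e j + m) :
    IsUnit (powMatrix γ e).det := by
  have : powMatrix γ e = vandermonde fun i => γ ^ e i := by
    ext i j
    simp [powMatrix, pow_mul]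
  rw [this, det_vandermonde, IsUnit.prod_univ_iff]
  exact fun i => IsUnit.prod_iff.2 fun j hj =>
    isUnit_pow_sub_pow hroot hprim (he.ne (mem_Ioi.1 hj).ne') (hclose j i) (hclose i j)

theorem isUnit_natCast_of_commRing {R : Type*} [CommRing R] {γ : R} (hm : 0 < m)
    (hroot : γ ^ m = 1) (hprim : ∀ i : ℕ, 0 < i → i < m → IsUnit (γ ^ i - 1)) :
    IsUnit (m : R) := by
  have hdet := congrArg det (powMatrix_sub_mul_powMatrix hroot hprim)
  rw [det_mul, det_smul, det_one, mul_one, Fintype.card_fin] at hdet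
  refine (isUnit_pow_iff hm.ne').1 (hdet ▸ IsUnit.mul ?_ ?_)
  · exact isUnit_det_powMatrix hroot hprim (fun i j h => Fin.ext (by omega)) (by omega)
  · exact isUnit_det_powMatrix hroot hprim Fin.val_injective (by omega)

theorem Subring.isUnit_of_isUnit_coe_centralizer {S : Set A} {x : Subring.centralizer S}
    (hx : IsUnit (x : A)) : IsUnit x := by
  obtain ⟨u, hu⟩ := hx
  have hinv : (↑u⁻¹ : A) ∈ Subring.centralizer S := fun s hs =>
    (Commute.units_inv_right (hu ▸ x.2 s hs : Commute s u)).eq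
  exact ⟨⟨x, ⟨_, hinv⟩, Subtype.ext (by simp [← hu]), Subtype.ext (by simp [← hu])⟩, rfl⟩

open scoped IsMulCommutative in
theorem isUnit_natCast_of_pow_eq_one (hm : 0 < m) (hroot : γ ^ m = 1)
    (hprim : ∀ i : ℕ, 0 < i → i < m → IsUnit (γ ^ i - 1)) : IsUnit (m : A) := by
  let C := Subring.centralizer (Subring.centralizer {γ} : Set A)
  have hγ : γ ∈ C := Set.subset_centralizer_centralizer rfl
  have : IsMulCommutative C := .of_setLike_mul_comm fun _ hx _ hy =>
    Set.centralizer_centralizer_comm_of_comm (by simp) _ hx _ hy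
  have := isUnit_natCast_of_commRing (R := C) (γ := ⟨γ, hγ⟩) hm (Subtype.ext (by simpa using hroot))
    fun i hi hi' => Subring.isUnit_of_isUnit_coe_centralizer (by simpa using hprim i hi hi')
  simpa using this.map C.subtype

-- Row `i` of the generator matrix is `x^i` scaled by the multiplier `x = (γ^j)_j`.
def leftGRSCode (γ : A) (m k : ℕ) : Set (Fin m → A) :=
  {w | ∃ c : Fin k → A, ∀ j, w j = ∑ i : Fin k, c i * γ ^ ((j : ℕ) * ((i : ℕ) + 1))}

def rightRSCode (γ : A) (m n : ℕ) : Set (Fin m → A) :=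
  {w | ∃ c : Fin n → A, ∀ j, w j = ∑ i : Fin n, γ ^ ((j : ℕ) * (i : ℕ)) * c i}

def rightDual (S : Set (Fin m → A)) : Set (Fin m → A) :=
  {y | ∀ s ∈ S, ∑ j, s j * y j = 0}

theorem rightRSCode_subset_rightDual_leftGRSCode {k : ℕ} (hroot : γ ^ m = 1)
    (hprim : ∀ i : ℕ, 0 < i → i < m → IsUnit (γ ^ i - 1)) :
    rightRSCode γ m (m - k) ⊆ rightDual (leftGRSCode γ m k) := by
  rintro y ⟨c, hc⟩ s ⟨d, hd⟩
  let B : Matrix (Fin k) (Fin m) A := of fun t j => γ ^ ((j : ℕ) * (t + 1))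
  let H : Matrix (Fin m) (Fin (m - k)) A := of fun j i => γ ^ ((j : ℕ) * i)
  have hBH : B * H = 0 := by
    ext t i
    simp only [B, H, mul_apply, of_apply, ← pow_add, ← mul_add, Matrix.zero_apply]
    rw [sum_pow_mul_eq_ite hroot hprim, if_neg (Nat.not_dvd_of_pos_of_lt (by omega) (by omega))]
  change s ⬝ᵥ y = 0
  rw [show s = d ᵥ* B from funext hd, show y = H *ᵥ c from funext hc, dotProduct_mulVec,
    vecMul_vecMul, hBH, vecMul_zero, zero_dotProduct]

theorem rightDual_leftGRSCode_subset_rightRSCode [Finite A] {k : ℕ} (hm : 0 < m)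
    (hroot : γ ^ m = 1) (hprim : ∀ i : ℕ, 0 < i → i < m → IsUnit (γ ^ i - 1)) :
    rightDual (leftGRSCode γ m k) ⊆ rightRSCode γ m (m - k) := by
  intro y hy
  have hcheck (t : Fin k) : ∑ l : Fin m, γ ^ ((l : ℕ) * (t + 1)) * y l = 0 :=
    hy _ ⟨Pi.single t 1, fun j => by simp [Pi.single_apply]⟩
  obtain ⟨u, hu⟩ := isUnit_natCast_of_pow_eq_one hm hroot hprim
  have hinv : powMatrix γ (↑) * ((↑u⁻¹ : A) • powMatrix γ (fun i => m - i)) = 1 :=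
    mul_eq_one_comm.1 <| by
      rw [Matrix.smul_mul, powMatrix_sub_mul_powMatrix hroot hprim, smul_smul, ← hu,
        Units.inv_mul, one_smul]
  set c := ((↑u⁻¹ : A) • powMatrix γ (fun i => m - i)) *ᵥ y
  have hc (i : Fin m) (hi : m - k ≤ i) : c i = 0 := by
    have := hcheck ⟨m - i - 1, by omega⟩
    rw [show m - (i : ℕ) - 1 + 1 = m - i by omega] at this
    simp only [c, mulVec, dotProduct, Matrix.smul_apply, powMatrix, of_apply, smul_eq_mul,
      mul_assoc, ← mul_sum]
    simp_rw [mul_comm (m - (i : ℕ))]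
    rw [this, mul_zero]
  have hy' : y = powMatrix γ (↑) *ᵥ c := by rw [mulVec_mulVec, hinv, one_mulVec]
  refine ⟨fun i => c (Fin.castLE (by omega) i), fun j => ?_⟩
  rw [hy']
  exact (Fin.sum_castLE_eq_sum _ _ fun i hi => by simp [hc i hi]).symm

end

theorem stmt_4_general {A : Type*} [Ring A] [Fintype A] {m k : ℕ}
    (hkm : k < m) (γ : A)
    (hroot : γ ^ m = 1)
    (hprim : ∀ i : ℕ, 0 < i → i < m → IsUnit (γ ^ i - 1)) :
    {y : Fin m → A | ∀ s ∈ {w : Fin m → A | ∃ c : Fin k → A,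
        ∀ j, w j = ∑ i : Fin k, c i * γ ^ ((j : ℕ) * ((i : ℕ) + 1))},
      ∑ j : Fin m, s j * y j = 0}
    = {w : Fin m → A | ∃ c : Fin (m - k) → A,
        ∀ j, w j = ∑ i : Fin (m - k), γ ^ ((j : ℕ) * (i : ℕ)) * c i} :=
  (rightDual_leftGRSCode_subset_rightRSCode (by omega) hroot hprim).antisymm
    (rightRSCode_subset_rightDual_leftGRSCode hroot hprim)

/-- over a finite ring `A` with `γ` a primitive `m`-th root of unity and
`0 < k < m`, the right dual of the left generalized Reed–Solomon code with support and
multiplier `x = (1, γ, …, γ^{m-1})` and dimension `k` (left-spanned by the vectors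
`(γ^{ji})_j` for `i = 1,…,k`) equals the right Reed–Solomon code with support `x`
and dimension `m - k` (right-spanned by `(γ^{ji})_j` for `i = 0,…,m-k-1`). -/
theorem stmt_4 {A : Type*} [Ring A] [Fintype A] {m k : ℕ}
    (hk : 0 < k) (hkm : k < m) (γ : A)
    (hroot : γ ^ m = 1)
    (hprim : ∀ i : ℕ, 0 < i → i < m → IsUnit (γ ^ i - 1)) :
    {y : Fin m → A | ∀ s ∈ {w : Fin m → A | ∃ c : Fin k → A,
        ∀ j, w j = ∑ i : Fin k, c i * γ ^ ((j : ℕ) * ((i : ℕ) + 1))},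
      ∑ j : Fin m, s j * y j = 0}
    = {w : Fin m → A | ∃ c : Fin (m - k) → A,
        ∀ j, w j = ∑ i : Fin (m - k), γ ^ ((j : ℕ) * (i : ℕ)) * c i} :=
  stmt_4_general hkm γ hroot hprim
end

section
/- Let A be a finite ring with identity, γ ∈ A a primitive m-th root of unity, x = (1,γ,…,γ^{m-1}), and 0 < k < m. Then the left dual of the right Reed-Solomon code over A with support x and dimension m - k equals the left generalized Reed-Solomon code with support x, multiplier x, and dimension k. -/
/-!
The left GRS code lies in the dual because `∑ j < m, γ ^ (j * a) = 0` for `0 < a < m`: this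
geometric sum is annihilated by the unit `γ ^ a - 1`. Conversely, Fourier inversion
`m * y j = ∑ t < m, ŷ t * γ ^ ((m - j) * t)`, with `ŷ t = ∑ j, y j * γ ^ (j * t)`, writes a vector
orthogonal to the right RS code (so `ŷ t = 0` for `t < m - k`) as a left combination of the rows
`(γ ^ (j * (i + 1)))_j`, `i < k`, provided `m` is a unit. It is, because the Vandermonde matrices
`V` of the `γ ^ i` and `W` of the `γ ^ (m - i)` satisfy `V * Wᵀ = m • 1` and their determinants are
products of the units `γ ^ a * (γ ^ b - 1)`. The determinants live in the double centralizer of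
`γ`, a commutative subring that contains the inverses of its elements that are units of `A`.
-/

open Finset

theorem geom_sum_eq_zero_of_pow_eq_one_s5 {A : Type*} [Ring A] {β : A} {m : ℕ} (hβ : β ^ m = 1)
    (hu : IsUnit (β - 1)) : ∑ s ∈ range m, β ^ s = 0 :=
  hu.mul_right_eq_zero.mp (by rw [mul_geom_sum, hβ, sub_self])

theorem Nat.dvd_add_sub_iff_eq {m i t : ℕ} (hi : i < m) (ht : t < m) : m ∣ i + (m - t) ↔ i = t := by
  constructor
  · rintro ⟨c, hc⟩
    rcases c with _ | _ | c
    · omega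
    · omega
    · have : m * (c + 1 + 1) = m * c + 2 * m := by ring
      omega
  · rintro rfl
    exact ⟨1, by omega⟩

theorem Matrix.isUnit_det_vandermonde {R : Type*} [CommRing R] {n : ℕ} {v : Fin n → R}
    (hv : ∀ i j, i < j → IsUnit (v j - v i)) : IsUnit (vandermonde v).det := by
  rw [det_vandermonde]
  exact IsUnit.prod_univ_iff.mpr fun i => IsUnit.prod_iff.mpr fun j hj => hv i j (mem_Ioi.mp hj)

theorem Subring.isMulCommutative_centralizer_centralizer {R : Type*} [Ring R] {s : Set R}
    (hcomm : ∀ x ∈ s, ∀ y ∈ s, x * y = y * x) :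
    IsMulCommutative (centralizer (s.centralizer)) :=
  .of_setLike_mul_comm fun _ h₁ _ h₂ ↦ Set.centralizer_centralizer_comm_of_comm hcomm _ h₁ _ h₂

theorem Subring.isUnit_of_isUnit_coe {R : Type*} [Ring R] {s : Set R} {x : centralizer s}
    (hx : IsUnit (x : R)) : IsUnit x := by
  obtain ⟨u, hu⟩ := hx
  have hinv : (↑u⁻¹ : R) ∈ centralizer s := fun g hg =>
    (Commute.units_inv_right (hu ▸ x.2 g hg : Commute g u)).eq
  refine ⟨⟨x, ⟨_, hinv⟩, Subtype.ext ?_, Subtype.ext ?_⟩, rfl⟩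
  · change (x : R) * ↑u⁻¹ = 1
    rw [← hu, u.mul_inv]
  · change ↑u⁻¹ * (x : R) = 1
    rw [← hu, u.inv_mul]

def dft {A : Type*} [Ring A] {m : ℕ} (γ : A) (y : Fin m → A) (t : ℕ) : A :=
  ∑ j, y j * γ ^ ((j : ℕ) * t)

theorem sum_mul_sum_pow_mul_eq_sum_dft {A : Type*} [Ring A] {m n : ℕ} (γ : A) (y : Fin m → A)
    (c : Fin n → A) :
    ∑ j : Fin m, y j * ∑ t : Fin n, γ ^ ((j : ℕ) * t) * c t = ∑ t : Fin n, dft γ y t * c t := by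
  simp only [dft, mul_sum, sum_mul, mul_assoc]
  exact sum_comm

/-- Stronger than Mathlib's `IsPrimitiveRoot`, which only prescribes the multiplicative order. -/
structure IsStronglyPrimitiveRoot {A : Type*} [Ring A] (γ : A) (m : ℕ) : Prop where
  pow_eq_one : γ ^ m = 1
  isUnit_pow_sub_one : ∀ i : ℕ, 0 < i → i < m → IsUnit (γ ^ i - 1)

namespace IsStronglyPrimitiveRoot

variable {A : Type*} [Ring A] {γ : A} {m : ℕ}

theorem geom_sum_pow (h : IsStronglyPrimitiveRoot γ m) (a : ℕ) :
    ∑ s ∈ range m, (γ ^ a) ^ s = if m ∣ a then (m : A) else 0 := by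
  obtain rfl | hm := m.eq_zero_or_pos
  · simp
  split_ifs with ha
  · obtain ⟨c, rfl⟩ := ha
    simp [pow_mul, h.pow_eq_one]
  · have hmod : γ ^ a = γ ^ (a % m) :=
      (pow_eq_pow_of_modEq (Nat.mod_modEq a m) h.pow_eq_one).symm
    refine geom_sum_eq_zero_of_pow_eq_one_s5 ?_ ?_
    · rw [← pow_mul, mul_comm, pow_mul, h.pow_eq_one, one_pow]
    · rw [hmod]
      exact h.isUnit_pow_sub_one _ (Nat.pos_of_ne_zero fun h0 => ha (Nat.dvd_of_mod_eq_zero h0))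
        (Nat.mod_lt _ hm)

theorem sum_range_pow_mul_pow_sub (h : IsStronglyPrimitiveRoot γ m) {i t : ℕ} (hi : i < m)
    (ht : t < m) : ∑ s ∈ range m, (γ ^ i * γ ^ (m - t)) ^ s = if i = t then (m : A) else 0 := by
  rw [← pow_add, h.geom_sum_pow, if_congr (Nat.dvd_add_sub_iff_eq hi ht) rfl rfl]

theorem sum_pow_mul_eq_zero (h : IsStronglyPrimitiveRoot γ m) {a : ℕ} (ha : 0 < a) (ham : a < m) :
    ∑ j : Fin m, γ ^ ((j : ℕ) * a) = 0 := by
  simp only [pow_mul', Fin.sum_univ_eq_sum_range (fun j => (γ ^ a) ^ j), h.geom_sum_pow,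
    if_neg (Nat.not_dvd_of_pos_of_lt ha ham)]

theorem isUnit (h : IsStronglyPrimitiveRoot γ m) (hm : 0 < m) : IsUnit γ :=
  IsUnit.of_pow_eq_one h.pow_eq_one hm.ne'

theorem isUnit_pow_sub_pow (h : IsStronglyPrimitiveRoot γ m) {a b : ℕ} (hab : a < b)
    (hba : b - a < m) : IsUnit (γ ^ b - γ ^ a) := by
  have hfac : γ ^ b - γ ^ a = γ ^ a * (γ ^ (b - a) - 1) := by
    rw [mul_sub, mul_one, ← pow_add, Nat.add_sub_cancel' hab.le]
  rw [hfac]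
  exact ((h.isUnit (by omega)).pow a).mul (h.isUnit_pow_sub_one _ (by omega) hba)

open Matrix in
theorem isUnit_natCast_of_comm {R : Type*} [CommRing R] {u : R} {m : ℕ}
    (h : IsStronglyPrimitiveRoot u m) (hm : 0 < m) : IsUnit (m : R) := by
  set V := vandermonde fun i : Fin m => u ^ (i : ℕ)
  set W := vandermonde fun i : Fin m => u ^ (m - i)
  have hVW : V * Wᵀ = diagonal fun _ => (m : R) := by
    ext i t
    rw [vandermonde_mul_vandermonde_transpose,
      Fin.sum_univ_eq_sum_range (fun s => (u ^ (i : ℕ) * u ^ (m - t)) ^ s),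
      h.sum_range_pow_mul_pow_sub i.2 t.2, diagonal_apply, if_congr Fin.val_inj rfl rfl]
  have hdet : V.det * W.det = (m : R) ^ m := by
    rw [← det_transpose W, ← det_mul, hVW, det_diagonal, prod_const, card_univ, Fintype.card_fin]
  have hV : IsUnit V.det :=
    isUnit_det_vandermonde fun i j hij => h.isUnit_pow_sub_pow hij (by omega)
  have hW : IsUnit W.det := isUnit_det_vandermonde fun i j hij => by
    rw [← neg_sub]
    exact (h.isUnit_pow_sub_pow (by omega) (by omega)).neg
  exact (isUnit_pow_iff hm.ne').mp (hdet ▸ hV.mul hW)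

open scoped IsMulCommutative in
theorem isUnit_natCast (h : IsStronglyPrimitiveRoot γ m) (hm : 0 < m) : IsUnit (m : A) := by
  let C := Subring.centralizer (Set.centralizer {γ})
  have := Subring.isMulCommutative_centralizer_centralizer (s := {γ}) (by simp)
  let g : C := ⟨γ, Set.subset_centralizer_centralizer rfl⟩
  have hg : IsStronglyPrimitiveRoot g m :=
    ⟨Subtype.ext (by simpa using h.pow_eq_one), fun i hi him =>
      Subring.isUnit_of_isUnit_coe (by simpa using h.isUnit_pow_sub_one i hi him)⟩
  simpa using (hg.isUnit_natCast_of_comm hm).map C.subtype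

theorem natCast_mul_eq_sum_dft (h : IsStronglyPrimitiveRoot γ m) (y : Fin m → A) (j : Fin m) :
    (m : A) * y j = ∑ t ∈ range m, dft γ y t * γ ^ ((m - j) * t) := by
  calc (m : A) * y j = ∑ j' : Fin m, y j' * if (j' : ℕ) = j then (m : A) else 0 := by
        simp [Fin.val_inj, Nat.cast_comm]
    _ = ∑ j' : Fin m, y j' * ∑ t ∈ range m, (γ ^ (j' : ℕ) * γ ^ (m - j)) ^ t :=
        sum_congr rfl fun j' _ => by rw [h.sum_range_pow_mul_pow_sub j'.2 j.2]
    _ = ∑ t ∈ range m, dft γ y t * γ ^ ((m - j) * t) := by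
        simp only [dft, mul_sum, sum_mul, mul_assoc, pow_mul, (Commute.pow_pow_self γ _ _).mul_pow]
        exact sum_comm

theorem exists_eq_sum_of_dft_eq_zero (h : IsStronglyPrimitiveRoot γ m) {k : ℕ}
    (hkm : k < m) {y : Fin m → A} (hy : ∀ t < m - k, dft γ y t = 0) :
    ∃ c : Fin k → A, ∀ j : Fin m, y j = ∑ i : Fin k, c i * γ ^ ((j : ℕ) * (i + 1)) := by
  obtain ⟨u, hu⟩ := h.isUnit_natCast (by omega)
  refine ⟨fun i => ↑u⁻¹ * dft γ y (m - 1 - i), fun j => ?_⟩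
  have hexp : ∀ i < m, (m - j) * (m - 1 - i) ≡ j * (i + 1) [MOD m] := fun i hi => by
    rw [Nat.modEq_iff_dvd]
    push_cast [Nat.cast_sub j.2.le, Nat.cast_sub (by omega : i ≤ m - 1),
      Nat.cast_sub (by omega : 1 ≤ m)]
    exact ⟨(j : ℤ) - m + 1 + i, by ring⟩
  have hsum : (m : A) * y j = ∑ i ∈ range k, dft γ y (m - 1 - i) * γ ^ ((j : ℕ) * (i + 1)) := by
    calc (m : A) * y j = ∑ i ∈ range m, dft γ y (m - 1 - i) * γ ^ ((m - j) * (m - 1 - i)) := by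
          rw [h.natCast_mul_eq_sum_dft, ← sum_range_reflect]
      _ = ∑ i ∈ range k, dft γ y (m - 1 - i) * γ ^ ((m - j) * (m - 1 - i)) := by
          refine (sum_subset (range_subset_range.mpr hkm.le) fun i hi hik => ?_).symm
          rw [hy _ (by simp at hi hik; omega), zero_mul]
      _ = _ := sum_congr rfl fun i hi => by
          rw [pow_eq_pow_of_modEq (hexp i (by simp at hi; omega)) h.pow_eq_one]
  calc y j = ↑u⁻¹ * ((m : A) * y j) := by rw [← hu, ← mul_assoc, u.inv_mul, one_mul]
    _ = _ := by
      rw [hsum, mul_sum, ← Fin.sum_univ_eq_sum_range]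
      simp only [mul_assoc]

theorem dft_sum_mul_pow_eq_zero (h : IsStronglyPrimitiveRoot γ m) {k : ℕ} (c : Fin k → A)
    {t : ℕ} (ht : t < m - k) :
    dft γ (fun j : Fin m => ∑ i : Fin k, c i * γ ^ ((j : ℕ) * (i + 1))) t = 0 := by
  simp only [dft, sum_mul, mul_assoc, ← pow_add, ← mul_add]
  rw [sum_comm]
  exact sum_eq_zero fun i _ => by
    rw [← mul_sum, h.sum_pow_mul_eq_zero (by omega) (by omega), mul_zero]

end IsStronglyPrimitiveRoot

theorem stmt_5_general {A : Type*} [Ring A] {m k : ℕ}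
    (hkm : k < m) (γ : A)
    (hroot : γ ^ m = 1)
    (hprim : ∀ i : ℕ, 0 < i → i < m → IsUnit (γ ^ i - 1)) :
    {y : Fin m → A | ∀ s ∈ {w : Fin m → A | ∃ c : Fin (m - k) → A,
        ∀ j, w j = ∑ i : Fin (m - k), γ ^ ((j : ℕ) * (i : ℕ)) * c i},
      ∑ j : Fin m, y j * s j = 0}
    = {w : Fin m → A | ∃ c : Fin k → A,
        ∀ j, w j = ∑ i : Fin k, c i * γ ^ ((j : ℕ) * ((i : ℕ) + 1))} := by
  have h : IsStronglyPrimitiveRoot γ m := ⟨hroot, hprim⟩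
  ext y
  simp only [Set.mem_ofPred_eq, forall_exists_index]
  constructor
  · intro hy
    refine h.exists_eq_sum_of_dft_eq_zero hkm fun t ht => hy _ (Pi.single ⟨t, ht⟩ 1) fun j => ?_
    simp [Pi.single_apply]
  · rintro ⟨c, hc⟩ s c' hs
    rw [funext hc, funext hs, sum_mul_sum_pow_mul_eq_sum_dft]
    exact sum_eq_zero fun t _ => by rw [h.dft_sum_mul_pow_eq_zero c t.2, zero_mul]

/-- over a finite ring `A` with `γ` a primitive `m`-th root of unity and
`0 < k < m`, the left dual of the right Reed–Solomon code with support
`x = (1, γ, …, γ^{m-1})` and dimension `m - k` (right-spanned by `(γ^{ji})_j` for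
`i = 0,…,m-k-1`) equals the left generalized Reed–Solomon code with support and
multiplier `x` and dimension `k` (left-spanned by `(γ^{ji})_j` for `i = 1,…,k`). -/
theorem stmt_5 {A : Type*} [Ring A] [Fintype A] {m k : ℕ}
    (hk : 0 < k) (hkm : k < m) (γ : A)
    (hroot : γ ^ m = 1)
    (hprim : ∀ i : ℕ, 0 < i → i < m → IsUnit (γ ^ i - 1)) :
    {y : Fin m → A | ∀ s ∈ {w : Fin m → A | ∃ c : Fin (m - k) → A,
        ∀ j, w j = ∑ i : Fin (m - k), γ ^ ((j : ℕ) * (i : ℕ)) * c i},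
      ∑ j : Fin m, y j * s j = 0}
    = {w : Fin m → A | ∃ c : Fin k → A,
        ∀ j, w j = ∑ i : Fin k, c i * γ ^ ((j : ℕ) * ((i : ℕ) + 1))} :=
  stmt_5_general hkm γ hroot hprim
end

section
/- Let A be a ring with identity, let Q(X,Y) = Q₀(X) + Q₁(X)·Y ∈ A[X,Y] have degree at most 1 in Y (with the convention (a,b)Q = ∑ aⁱbʲ Q_{ij}), let g ∈ A[X], and let a ∈ A. Then the right evaluation at a of the univariate polynomial (X, g(X))Q := Q₀(X) + ∑ᵢ Xⁱ g(X) Q_{1i} equals (a, (a)g)Q, where (a)g denotes the right evaluation of g at a. -/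
open Polynomial

/-- Right evaluation of a polynomial over a possibly noncommutative ring:
`(a)f = ∑ aⁱ fᵢ`. -/
noncomputable def rightEval {A : Type*} [Semiring A] (f : Polynomial A) (a : A) : A :=
  f.sum fun e c => a ^ e * c

/-! Right evaluation `∑ aᵉ fₑ` keeps powers of `a` on the left and coefficients on the right,
so it is additive and, without any commutativity, turns left multiplication by `X ^ i` into
left multiplication by `a ^ i` and right multiplication by `C c` into right multiplication
by `c`; both are checked on monomials. -/

section RightEval

variable {A : Type*} [Semiring A]

lemma rightEval_zero (a : A) : rightEval (0 : A[X]) a = 0 :=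
  sum_zero_index _

lemma rightEval_add (f g : A[X]) (a : A) :
    rightEval (f + g) a = rightEval f a + rightEval g a :=
  sum_add_index f g _ (fun _ => mul_zero _) (fun _ _ _ => mul_add _ _ _)

lemma rightEval_monomial (n : ℕ) (c a : A) : rightEval (monomial n c) a = a ^ n * c :=
  sum_monomial_index c _ (mul_zero _)

noncomputable def rightEvalAddHom (a : A) : A[X] →+ A where
  toFun f := rightEval f a
  map_zero' := rightEval_zero a
  map_add' f g := rightEval_add f g a

lemma rightEval_finset_sum {ι : Type*} (s : Finset ι) (F : ι → A[X]) (a : A) :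
    rightEval (∑ i ∈ s, F i) a = ∑ i ∈ s, rightEval (F i) a :=
  map_sum (rightEvalAddHom a) F s

lemma rightEval_mul_C (f : A[X]) (c a : A) : rightEval (f * C c) a = rightEval f a * c := by
  induction f using Polynomial.induction_on' with
  | add p q hp hq => rw [add_mul, rightEval_add, rightEval_add, hp, hq, add_mul]
  | monomial n b => rw [monomial_mul_C, rightEval_monomial, rightEval_monomial, mul_assoc]

lemma rightEval_X_pow_mul (i : ℕ) (f : A[X]) (a : A) :
    rightEval (X ^ i * f) a = a ^ i * rightEval f a := by
  induction f using Polynomial.induction_on' with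
  | add p q hp hq => rw [mul_add, rightEval_add, rightEval_add, hp, hq, mul_add]
  | monomial n b =>
    rw [X_pow_mul_monomial, rightEval_monomial, rightEval_monomial, pow_add, mul_assoc,
      ← mul_assoc, ← mul_assoc, pow_mul_comm]

end RightEval

/-- for `Q(X,Y) = Q₀(X) + Q₁(X)·Y` over a ring `A`, `g ∈ A[X]` and
`a ∈ A`, the right evaluation at `a` of the univariate polynomial
`(X, g(X))Q = Q₀(X) + ∑ᵢ Xⁱ g(X) Q_{1i}` equals
`(a, (a)g)Q = (a)Q₀ + ∑ᵢ aⁱ ((a)g) Q_{1i}`. -/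
theorem stmt_10 {A : Type*} [Ring A] (Q₀ Q₁ g : A[X]) (a : A) :
    rightEval (Q₀ + ∑ i ∈ Q₁.support, X ^ i * g * C (Q₁.coeff i)) a
      = rightEval Q₀ a + ∑ i ∈ Q₁.support, a ^ i * rightEval g a * Q₁.coeff i := by
  simp only [rightEval_add, rightEval_finset_sum, rightEval_mul_C, rightEval_X_pow_mul]
end

section
/- Let Γ ∈ M_ℓ(F_{q^s}) be a primitive m-th root of unity and 2 ≤ δ ≤ m. The minimum ℓ-block distance of QBCH_q(m, ℓ, δ, Γ) is at least δ; in particular its minimum Hamming distance is at least δ. -/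
open Matrix

/-- The quasi-BCH code `QBCH_q(m, ℓ, δ, Γ)`. -/
def qbch {F K : Type*} [Field F] [Field K] [Algebra F K] (m ℓ δ : ℕ)
    (Γ : Matrix (Fin ℓ) (Fin ℓ) K) : Set (Fin m → Fin ℓ → F) :=
  {c | ∀ i : ℕ, 1 ≤ i → i ≤ δ - 1 →
    ∑ j : Fin m, (Γ ^ (i * (j : ℕ))) *ᵥ (fun r => algebraMap F K (c j r)) = 0}

/-! If a nonzero codeword were supported on a set `S` of fewer than `δ` blocks, its block
vector `(v_j)_{j ∈ S}` would solve the first `|S|` parity checks `∑_{j ∈ S} (Γ^j)^i v_j = 0`,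
a block Vandermonde system in the commuting matrices `Γ^j`. Multiplying block `j` by
`Γ^j - Γ^a` eliminates block `a` and leaves a system of the same shape on `S \ {a}`; since
`Γ` and all differences `Γ^a - Γ^b = Γ^b (Γ^(a-b) - 1)` are invertible, induction on `|S|`
forces every `v_j` to vanish. -/

open Finset

section Vandermonde

variable {R M : Type*} [Ring R] [AddCommGroup M] [Module R M]

theorem IsUnit.pow_sub_pow_of_ne {x : R} (hx : IsUnit x) {m : ℕ}
    (hprim : ∀ i : ℕ, 0 < i → i < m → IsUnit (x ^ i - 1))
    {a b : ℕ} (ha : a < m) (hb : b < m) (hab : a ≠ b) : IsUnit (x ^ a - x ^ b) := by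
  wlog hba : b < a generalizing a b
  · simpa only [neg_sub] using (this hb ha hab.symm (by omega)).neg
  have hfactor : x ^ a - x ^ b = x ^ b * (x ^ (a - b) - 1) := by
    rw [mul_sub, mul_one, ← pow_add, Nat.add_sub_cancel' hba.le]
  rw [hfactor]
  exact (hx.pow b).mul (hprim _ (by omega) (by omega))

variable {ι : Type*} [DecidableEq ι]

theorem sum_pow_smul_sub_smul_eq_zero (x : ι → R) (hcomm : ∀ a b, Commute (x a) (x b))
    {a : ι} {s : Finset ι} (ha : a ∉ s) {v : ι → M} {i : ℕ}
    (h₁ : ∑ j ∈ insert a s, x j ^ i • v j = 0)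
    (h₂ : ∑ j ∈ insert a s, x j ^ (i + 1) • v j = 0) :
    ∑ j ∈ s, x j ^ i • (x j - x a) • v j = 0 := by
  have hterm : ∀ j, x j ^ i • (x j - x a) • v j = x j ^ (i + 1) • v j - x a • x j ^ i • v j := by
    intro j
    rw [smul_smul, smul_smul, mul_sub, ← pow_succ, ((hcomm j a).pow_left i).eq, sub_smul]
  calc ∑ j ∈ s, x j ^ i • (x j - x a) • v j
      = ∑ j ∈ insert a s, x j ^ i • (x j - x a) • v j := by
        rw [sum_insert ha, sub_self, zero_smul, smul_zero, zero_add]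
    _ = ∑ j ∈ insert a s, x j ^ (i + 1) • v j - x a • ∑ j ∈ insert a s, x j ^ i • v j := by
        rw [smul_sum, ← sum_sub_distrib]
        exact sum_congr rfl fun j _ => hterm j
    _ = 0 := by rw [h₁, h₂, smul_zero, sub_zero]

theorem eq_zero_of_forall_sum_pow_smul_eq_zero (x : ι → R)
    (hcomm : ∀ a b, Commute (x a) (x b)) (hunit : ∀ a, IsUnit (x a))
    (hdiff : ∀ a b, a ≠ b → IsUnit (x a - x b)) (S : Finset ι) (v : ι → M)
    (hv : ∀ i : ℕ, 1 ≤ i → i ≤ #S → ∑ j ∈ S, x j ^ i • v j = 0) :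
    ∀ j ∈ S, v j = 0 := by
  induction S using Finset.induction_on generalizing v with
  | empty => simp
  | insert a s ha ih =>
    rw [card_insert_of_notMem ha] at hv
    have hs : ∀ j ∈ s, v j = 0 := by
      have hw := ih (fun j => (x j - x a) • v j) fun i hi his =>
        sum_pow_smul_sub_smul_eq_zero x hcomm ha (hv i hi (by omega)) (hv (i + 1) (by omega)
          (by omega))
      exact fun j hj => (hdiff j a (ne_of_mem_of_not_mem hj ha)).smul_eq_zero.1 (hw j hj)
    have hva : v a = 0 := by
      have h₁ := hv 1 le_rfl (by omega)
      rw [sum_insert ha, sum_eq_zero fun j hj => by rw [hs j hj, smul_zero], add_zero,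
        pow_one] at h₁
      exact (hunit a).smul_eq_zero.1 h₁
    intro j hj
    rcases mem_insert.1 hj with rfl | hj
    exacts [hva, hs j hj]

end Vandermonde

theorem card_filter_ne_zero_le_sum_hammingNorm {ι κ : Type*} [Fintype ι] [Fintype κ]
    {β : κ → Type*} [∀ k, Zero (β k)] [∀ k, DecidableEq (β k)] (c : ι → ∀ k, β k) :
    #{j | c j ≠ 0} ≤ ∑ j, hammingNorm (c j) :=
  calc #{j | c j ≠ 0} = ∑ j with c j ≠ 0, 1 := card_eq_sum_ones _
    _ ≤ ∑ j with c j ≠ 0, hammingNorm (c j) :=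
        sum_le_sum fun _ hj => hammingNorm_pos_iff.2 (mem_filter.1 hj).2
    _ ≤ ∑ j, hammingNorm (c j) := sum_le_sum_of_subset (subset_univ _)

theorem stmt_17_general {F K : Type*} [Field F] [Field K] [Algebra F K] [DecidableEq F]
    {m ℓ δ : ℕ}
    (Γ : Matrix (Fin ℓ) (Fin ℓ) K)
    (hroot : Γ ^ m = 1)
    (hprim : ∀ i : ℕ, 0 < i → i < m → IsUnit (Γ ^ i - 1)) :
    ∀ c ∈ qbch (F := F) m ℓ δ Γ, c ≠ 0 →
      δ ≤ (Finset.univ.filter fun j : Fin m => c j ≠ 0).card ∧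
      δ ≤ ∑ j : Fin m, hammingNorm (c j) := by
  intro c hc hc0
  obtain ⟨j₀, hj₀⟩ := Function.ne_iff.1 hc0
  have hΓ : IsUnit Γ := IsUnit.of_pow_eq_one hroot (Fin.pos j₀).ne'
  set v : Fin m → Fin ℓ → K := fun j r => algebraMap F K (c j r)
  have hv : ∀ j, v j = 0 → c j = 0 := fun j h =>
    funext fun r => (map_eq_zero (algebraMap F K)).1 (congrFun h r)
  have hblock : δ ≤ #{j | c j ≠ 0} := by
    by_contra! hlt
    refine hj₀ (hv j₀ (eq_zero_of_forall_sum_pow_smul_eq_zero (fun j : Fin m => Γ ^ (j : ℕ))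
      (fun _ _ => Commute.pow_pow_self Γ _ _) (fun _ => hΓ.pow _)
      (fun a b hab => hΓ.pow_sub_pow_of_ne hprim a.2 b.2 (Fin.val_ne_of_ne hab)) {j | c j ≠ 0} v
      (fun i hi his => ?_) j₀ (by simpa using hj₀)))
    rw [← hc i hi (by omega), sum_filter_of_ne fun j _ hj => ?_]
    · simp only [← pow_mul', smul_eq_mulVec, v]
    · contrapose! hj
      simp only [hj, v, Pi.zero_apply, map_zero]
      exact smul_zero _
  exact ⟨hblock, hblock.trans (card_filter_ne_zero_le_sum_hammingNorm c)⟩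

/-- for `Γ ∈ M_ℓ(F_{q^s})` a primitive `m`-th root of unity and
`2 ≤ δ ≤ m`, every nonzero codeword of `QBCH_q(m,ℓ,δ,Γ)` has `ℓ`-block weight at
least `δ`; in particular its Hamming weight is at least `δ`. -/
theorem stmt_17 {F K : Type*} [Field F] [Field K] [Algebra F K] [DecidableEq F]
    {m ℓ δ : ℕ}
    (Γ : Matrix (Fin ℓ) (Fin ℓ) K)
    (hroot : Γ ^ m = 1)
    (hprim : ∀ i : ℕ, 0 < i → i < m → IsUnit (Γ ^ i - 1))
    (hδ2 : 2 ≤ δ) (hδm : δ ≤ m) :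
    ∀ c ∈ qbch (F := F) m ℓ δ Γ, c ≠ 0 →
      δ ≤ (Finset.univ.filter fun j : Fin m => c j ≠ 0).card ∧
      δ ≤ ∑ j : Fin m, hammingNorm (c j) :=
  stmt_17_general Γ hroot hprim
end
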